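/- If G is a connected subcubic graph of order n ≥ 6 with n ≡ 2 (mod 4), then C(G) ≤ 7/12 + 14/(12n). -/

import Mathlib

namespace ClusterCoeff

/-- The degree of a vertex. -/
noncomputable def deg {V : Type*} (G : SimpleGraph V) (u : V) : ℕ :=
  Nat.card (G.neighborSet u)

/-- The number of edges of the subgraph induced by the neighborhood of `u`. -/
noncomputable def nbrE {V : Type*} (G : SimpleGraph V) (u : V) : ℕ :=
  Nat.card {p : G.neighborSet u × G.neighborSet u // G.Adj p.1 p.2} / 2

/-- The clustering coefficient of the vertex `u`. -/
noncomputable def localCC {V : Type*} (G : SimpleGraph V) (u : V) : ℝ :=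
  if 2 ≤ deg G u then (nbrE G u : ℝ) / ((deg G u).choose 2) else 0

/-- The clustering coefficient of the graph `G`. -/
noncomputable def cc {V : Type*} [Fintype V] (G : SimpleGraph V) : ℝ :=
  (∑ u, localCC G u) / (Fintype.card V)

/-- The complete graph on `n` vertices minus the edge between vertices `0` and `1`. -/
def Kminus (n : ℕ) [NeZero n] : SimpleGraph (Fin n) where
  Adj a b := a ≠ b ∧ ¬((a = 0 ∧ b = 1) ∨ (a = 1 ∧ b = 0))
  symm := by
    constructor
    intro a b h
    obtain ⟨h1, h2⟩ := h
    exact ⟨h1.symm, by tauto⟩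
  loopless := by
    constructor
    intro a h
    exact h.1 rfl

/-- The graph obtained from `G` by adding the edge `uv`. -/
def addEdge {V : Type*} (G : SimpleGraph V) (u v : V) : SimpleGraph V where
  Adj a b := a ≠ b ∧ (G.Adj a b ∨ (a = u ∧ b = v) ∨ (a = v ∧ b = u))
  symm := by
    constructor
    intro a b h
    obtain ⟨h1, h2⟩ := h
    refine ⟨h1.symm, ?_⟩
    rcases h2 with h | h | h
    · exact Or.inl h.symm
    · exact Or.inr (Or.inr ⟨h.2, h.1⟩)
    · exact Or.inr (Or.inl ⟨h.2, h.1⟩)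
  loopless := by
    constructor
    intro a h
    exact h.1 rfl

/-- The graph obtained from `G` by deleting the edge `uv`. -/
def delEdge {V : Type*} (G : SimpleGraph V) (u v : V) : SimpleGraph V where
  Adj a b := G.Adj a b ∧ ¬((a = u ∧ b = v) ∨ (a = v ∧ b = u))
  symm := by
    constructor
    intro a b h
    exact ⟨h.1.symm, by tauto⟩
  loopless := by
    constructor
    intro a h
    exact G.loopless.irrefl a h.1

/-- The modified connected caveman graph `G(k,ℓ)`: `ℓ` copies of `K_{k+1} - e` arranged
cyclically, with one edge between consecutive copies, chosen so that the graph is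
`k`-regular (the two degree-deficient vertices `0` and `1` of each copy receive
the connecting edges). -/
def cave (k ℓ : ℕ) : SimpleGraph (ZMod ℓ × Fin (k + 1)) where
  Adj v w := v ≠ w ∧
    ((v.1 = w.1 ∧ v.2 ≠ w.2 ∧ ¬((v.2 = 0 ∧ w.2 = 1) ∨ (v.2 = 1 ∧ w.2 = 0))) ∨
     (w.1 = v.1 + 1 ∧ v.2 = 0 ∧ w.2 = 1) ∨
     (v.1 = w.1 + 1 ∧ w.2 = 0 ∧ v.2 = 1))
  symm := by
    constructor
    intro v w h
    obtain ⟨h0, h⟩ := h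
    refine ⟨h0.symm, ?_⟩
    rcases h with ⟨h1, h2, h3⟩ | ⟨h1, h2, h3⟩ | ⟨h1, h2, h3⟩
    · exact Or.inl ⟨h1.symm, h2.symm, by tauto⟩
    · exact Or.inr (Or.inr ⟨h1, h2, h3⟩)
    · exact Or.inr (Or.inl ⟨h1, h2, h3⟩)
  loopless := by
    constructor
    intro v h
    exact h.1 rfl

/-!
In a connected subcubic graph on at least five vertices there is no `K₄`, so the connected
components of the graph of edges lying on triangles (the *blocks*) are single vertices, lone
triangles and diamonds `K₄ - e`. A direct computation shows that every block `S` satisfies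
`∑_{z ∈ S} C_z + 7/12 · e(S, V ∖ S) ≤ 7/12 · |S| + 7/6`; for a lone triangle this uses that
its three vertices cannot all have degree `2` when `n > 3`. Summing over the blocks, every edge
between two blocks is counted twice, and by connectivity there are at least `#blocks - 1` of
them, which gives `∑_u C_u ≤ 7n/12 + 7/6`.
-/

open Finset

section LocalClustering
variable {V : Type*} [Fintype V] {G : SimpleGraph V} [DecidableRel G.Adj]

theorem deg_eq_degree (u : V) : deg G u = G.degree u := by
  rw [deg, ← SimpleGraph.card_neighborSet_eq_degree, Nat.card_eq_fintype_card]

theorem nbrE_eq_card_filter_div_two (u : V) :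
    nbrE G u = #{p ∈ G.neighborFinset u ×ˢ G.neighborFinset u | G.Adj p.1 p.2} / 2 := by
  rw [nbrE, Nat.card_eq_fintype_card, ← Fintype.card_coe]
  congr 1
  refine Fintype.card_congr
    { toFun := fun p => ⟨(p.1.1, p.1.2), mem_filter.2
        ⟨mem_product.2 ⟨(G.mem_neighborFinset u _).2 p.1.1.2,
          (G.mem_neighborFinset u _).2 p.1.2.2⟩, p.2⟩⟩
      invFun := fun p => ⟨(⟨p.1.1, ?_⟩, ⟨p.1.2, ?_⟩), ?_⟩
      left_inv := fun _ => rfl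
      right_inv := fun _ => rfl } <;>
  · have := p.2
    simp only [mem_filter, mem_product, SimpleGraph.mem_neighborFinset] at this
    simp [this]

theorem nbrE_eq_zero {u : V} (h : ∀ v w, G.Adj u v → G.Adj u w → ¬ G.Adj v w) :
    nbrE G u = 0 := by
  rw [nbrE_eq_card_filter_div_two, filter_false_of_mem, card_empty]
  simp only [mem_product, SimpleGraph.mem_neighborFinset]
  exact fun p hp => h _ _ hp.1 hp.2

theorem localCC_of_degree_eq_two {u : V} (h : G.degree u = 2) : localCC G u = nbrE G u := by
  simp [localCC, deg_eq_degree, h]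

theorem localCC_of_degree_eq_three {u : V} (h : G.degree u = 3) :
    localCC G u = nbrE G u / 3 := by
  simp [localCC, deg_eq_degree, h]

theorem localCC_eq_zero {u : V} (h : ∀ v w, G.Adj u v → G.Adj u w → ¬ G.Adj v w) :
    localCC G u = 0 := by
  simp [localCC, nbrE_eq_zero h]

variable [DecidableEq V]

theorem nbrE_of_neighborFinset_eq_pair {u x y : V} (hxy : x ≠ y)
    (h : G.neighborFinset u = {x, y}) : nbrE G u = if G.Adj x y then 1 else 0 := by
  rw [nbrE_eq_card_filter_div_two, h, card_filter, sum_product]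
  by_cases hadj : G.Adj x y <;> simp [sum_pair hxy, hadj, G.adj_comm y x]

theorem nbrE_of_neighborFinset_eq_triple {u x y z : V} (hxy : x ≠ y) (hxz : x ≠ z)
    (hyz : y ≠ z) (h : G.neighborFinset u = {x, y, z}) :
    nbrE G u = (if G.Adj x y then 1 else 0) + (if G.Adj x z then 1 else 0) +
      (if G.Adj y z then 1 else 0) := by
  have hx : x ∉ ({y, z} : Finset V) := by simp [hxy, hxz]
  rw [nbrE_eq_card_filter_div_two, h, card_filter, sum_product]
  simp only [sum_insert hx, sum_pair hyz, G.adj_comm y x, G.adj_comm z x, G.adj_comm z y,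
    SimpleGraph.irrefl, if_false]
  split_ifs <;> omega

theorem neighborFinset_eq_pair {u a b : V} (hu : G.degree u ≤ 2) (ha : G.Adj u a)
    (hb : G.Adj u b) (hab : a ≠ b) : G.neighborFinset u = {a, b} := by
  refine (eq_of_subset_of_card_le (fun x hx => ?_) (by rwa [card_pair hab])).symm
  rcases mem_insert.1 hx with rfl | hx
  · simpa using ha
  · simpa [mem_singleton.1 hx] using hb

theorem neighborFinset_eq_triple {u a b c : V} (hu : G.degree u ≤ 3) (ha : G.Adj u a)
    (hb : G.Adj u b) (hc : G.Adj u c) (hab : a ≠ b) (hac : a ≠ c) (hbc : b ≠ c) :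
    G.neighborFinset u = {a, b, c} := by
  have hcard : #{a, b, c} = 3 := by
    rw [card_insert_of_notMem (by simp [hab, hac]), card_pair hbc]
  refine (eq_of_subset_of_card_le (fun x hx => ?_) (by rwa [hcard])).symm
  simp only [mem_insert, mem_singleton] at hx
  rcases hx with rfl | rfl | rfl <;> simpa

theorem eq_or_eq_or_eq_of_adj {u a b c d : V} (hu : G.degree u ≤ 3) (ha : G.Adj u a)
    (hb : G.Adj u b) (hc : G.Adj u c) (hab : a ≠ b) (hac : a ≠ c) (hbc : b ≠ c)
    (hd : G.Adj u d) : d = a ∨ d = b ∨ d = c := by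
  simpa [neighborFinset_eq_triple hu ha hb hc hab hac hbc] using (G.mem_neighborFinset u d).2 hd

end LocalClustering

section Closure
variable {V : Type*} {H : SimpleGraph V}

theorem reachable_mem_of_closed {S : Set V} (hclosed : ∀ x ∈ S, ∀ y, H.Adj x y → y ∈ S)
    {u z : V} (hu : u ∈ S) (h : H.Reachable u z) : z ∈ S := by
  have h' := (H.reachable_iff_reflTransGen u z).1 h
  clear h
  induction h' with
  | refl => exact hu
  | tail _ hyz ih => exact hclosed _ ih _ hyz

theorem reachable_iff_mem_of_closed {S : Finset V}
    (hclosed : ∀ x ∈ S, ∀ y, H.Adj x y → y ∈ S) {u : V} (hu : u ∈ S)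
    (hreach : ∀ z ∈ S, H.Reachable u z) (z : V) :
    H.Reachable u z ↔ z ∈ S :=
  ⟨fun h => reachable_mem_of_closed (S := ↑S) hclosed hu h, hreach z⟩

theorem card_le_of_closed [Fintype V] (hH : H.Connected) {S : Finset V}
    (hclosed : ∀ x ∈ S, ∀ y, H.Adj x y → y ∈ S) {u : V} (hu : u ∈ S) :
    Fintype.card V ≤ #S :=
  card_le_card fun z _ => reachable_mem_of_closed (S := ↑S) hclosed hu (hH.preconnected u z)

end Closure

section Triangles
variable {V : Type*} {G : SimpleGraph V}

def triangleEdgeGraph (G : SimpleGraph V) : SimpleGraph V where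
  Adj u v := G.Adj u v ∧ ∃ w, G.Adj u w ∧ G.Adj v w
  symm := ⟨fun _ _ ⟨h, w, hu, hv⟩ => ⟨h.symm, w, hv, hu⟩⟩
  loopless := ⟨fun u h => G.loopless.irrefl u h.1⟩

structure IsLoneTriangleAt (G : SimpleGraph V) (u v w : V) : Prop where
  adj_left : G.Adj u v
  adj_right : G.Adj u w
  adj_base : G.Adj v w
  eq_of_adj_left : ∀ t, G.Adj u t → G.Adj v t → t = w
  eq_of_adj_right : ∀ t, G.Adj u t → G.Adj w t → t = v

/-- The diamond `K₄ - pq`, with tips `p`, `q` and centers `a`, `b`. -/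
structure IsDiamond (G : SimpleGraph V) (p q a b : V) : Prop where
  adj_centers : G.Adj a b
  adj_pa : G.Adj p a
  adj_pb : G.Adj p b
  adj_qa : G.Adj q a
  adj_qb : G.Adj q b
  tips_ne : p ≠ q
  not_adj_tips : ¬ G.Adj p q

theorem IsDiamond.swap_tips {p q a b : V} (h : IsDiamond G p q a b) : IsDiamond G q p a b :=
  ⟨h.adj_centers, h.adj_qa, h.adj_qb, h.adj_pa, h.adj_pb, h.tips_ne.symm,
    fun hqp => h.not_adj_tips hqp.symm⟩

theorem IsDiamond.swap_centers {p q a b : V} (h : IsDiamond G p q a b) : IsDiamond G p q b a :=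
  ⟨h.adj_centers.symm, h.adj_pb, h.adj_pa, h.adj_qb, h.adj_qa, h.tips_ne, h.not_adj_tips⟩

theorem triangleEdgeGraph_reachable_iff_of_no_triangle {u : V}
    (h : ∀ v w, G.Adj u v → G.Adj u w → ¬ G.Adj v w) (z : V) :
    (triangleEdgeGraph G).Reachable u z ↔ z ∈ ({u} : Finset V) := by
  refine reachable_iff_mem_of_closed (H := triangleEdgeGraph G)
    (fun x hx y ⟨hxy, t, hxt, hyt⟩ => ?_) (mem_singleton_self u)
    (fun z hz => by rw [mem_singleton.1 hz]) z
  rw [mem_singleton.1 hx] at hxy hxt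
  exact absurd hyt (h y t hxy hxt)

variable [Fintype V] [DecidableEq V] [DecidableRel G.Adj]

theorem IsLoneTriangleAt.eq_or_eq_of_adj {u v w z : V} (h : IsLoneTriangleAt G u v w)
    (hu : G.degree u ≤ 3) (hz : (triangleEdgeGraph G).Adj u z) : z = v ∨ z = w := by
  obtain ⟨huz, t, hut, hzt⟩ := hz
  by_cases htv : t = v
  · subst htv
    exact Or.inr (h.eq_of_adj_left z huz hzt.symm)
  by_cases htw : t = w
  · subst htw
    exact Or.inl (h.eq_of_adj_right z huz hzt.symm)
  rcases eq_or_eq_or_eq_of_adj hu h.adj_left h.adj_right hut h.adj_base.ne (Ne.symm htv)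
    (Ne.symm htw) huz with rfl | rfl | rfl
  · exact Or.inl rfl
  · exact Or.inr rfl
  · exact absurd hzt (G.loopless.irrefl _)

theorem IsLoneTriangleAt.localCC_add_le {u v w : V} (h : IsLoneTriangleAt G u v w)
    (hu : G.degree u ≤ 3) {S : Finset V} (hv : v ∈ S) (hw : w ∈ S) :
    (G.neighborFinset u ⊆ S ∧ localCC G u + 7 / 12 * #(G.neighborFinset u \ S) ≤ 1) ∨
      localCC G u + 7 / 12 * #(G.neighborFinset u \ S) ≤ 11 / 12 := by
  have hvw : v ≠ w := h.adj_base.ne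
  have hsub : {v, w} ⊆ G.neighborFinset u := by
    simp [insert_subset_iff, h.adj_left, h.adj_right]
  have h2 : 2 ≤ G.degree u := by
    simpa [card_pair hvw] using card_le_card hsub
  rcases (show G.degree u = 2 ∨ G.degree u = 3 by omega) with hdeg | hdeg
  · left
    have hN := neighborFinset_eq_pair hdeg.le h.adj_left h.adj_right hvw
    have hNS : G.neighborFinset u ⊆ S := by simp [hN, insert_subset_iff, hv, hw]
    rw [localCC_of_degree_eq_two hdeg, nbrE_of_neighborFinset_eq_pair hvw hN,
      if_pos h.adj_base, sdiff_eq_empty_iff_subset.2 hNS]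
    exact ⟨hNS, by norm_num⟩
  · right
    obtain ⟨t, ht, htvw⟩ := not_subset.1 (fun hle : G.neighborFinset u ⊆ {v, w} =>
      by simpa [card_pair hvw, hdeg] using card_le_card hle)
    simp only [mem_insert, mem_singleton, not_or] at htvw
    rw [SimpleGraph.mem_neighborFinset] at ht
    have hN := neighborFinset_eq_triple hu h.adj_left h.adj_right ht hvw (Ne.symm htvw.1)
      (Ne.symm htvw.2)
    have hvt : ¬ G.Adj v t := fun hvt => htvw.2 (h.eq_of_adj_left t ht hvt)
    have hwt : ¬ G.Adj w t := fun hwt => htvw.1 (h.eq_of_adj_right t ht hwt)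
    have hout : #(G.neighborFinset u \ S) ≤ 1 := by
      calc #(G.neighborFinset u \ S) ≤ #(G.neighborFinset u \ {v, w}) :=
            card_le_card (sdiff_subset_sdiff le_rfl (by simp [insert_subset_iff, hv, hw]))
        _ = 1 := by
          rw [card_sdiff_of_subset hsub, card_pair hvw, G.card_neighborFinset_eq_degree, hdeg]
    have hout' : (#(G.neighborFinset u \ S) : ℝ) ≤ 1 := by exact_mod_cast hout
    rw [localCC_of_degree_eq_three hdeg, nbrE_of_neighborFinset_eq_triple hvw (Ne.symm htvw.1)
      (Ne.symm htvw.2) hN, if_pos h.adj_base, if_neg hvt, if_neg hwt]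
    norm_num
    linarith

theorem IsDiamond.neighborFinset_center {p q a b : V} (h : IsDiamond G p q a b)
    (ha : G.degree a ≤ 3) : G.neighborFinset a = {b, p, q} :=
  neighborFinset_eq_triple ha h.adj_centers h.adj_pa.symm h.adj_qa.symm h.adj_pb.ne'
    h.adj_qb.ne' h.tips_ne

theorem IsDiamond.isLoneTriangleAt_tip {p q a b : V} (h : IsDiamond G p q a b)
    (ha : G.degree a ≤ 3) (hb : G.degree b ≤ 3) : IsLoneTriangleAt G p a b := by
  have key : ∀ {a b}, IsDiamond G p q a b → G.degree a ≤ 3 →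
      ∀ t, G.Adj p t → G.Adj a t → t = b := by
    intro a b h ha t hpt hat
    have := (G.mem_neighborFinset a t).2 hat
    rw [h.neighborFinset_center ha] at this
    simp only [mem_insert, mem_singleton] at this
    rcases this with rfl | rfl | rfl
    · rfl
    · exact absurd hpt (G.loopless.irrefl _)
    · exact absurd hpt h.not_adj_tips
  exact ⟨h.adj_pa, h.adj_pb, h.adj_centers, key h ha, key h.swap_centers hb⟩

theorem IsDiamond.localCC_center {p q a b : V} (h : IsDiamond G p q a b)
    (ha : G.degree a ≤ 3) : localCC G a = 2 / 3 := by
  have hN := h.neighborFinset_center ha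
  have hdeg : G.degree a = 3 := by
    rw [← G.card_neighborFinset_eq_degree, hN,
      card_insert_of_notMem (by simp [h.adj_pb.ne', h.adj_qb.ne']), card_pair h.tips_ne]
  rw [localCC_of_degree_eq_three hdeg, nbrE_of_neighborFinset_eq_triple h.adj_pb.ne'
    h.adj_qb.ne' h.tips_ne hN, if_pos h.adj_pb.symm, if_pos h.adj_qb.symm,
    if_neg h.not_adj_tips]
  norm_num

end Triangles

section Structure
variable {V : Type*} [Fintype V] [DecidableEq V] {G : SimpleGraph V} [DecidableRel G.Adj]

theorem card_le_four_of_adj (hd : ∀ v, G.degree v ≤ 3) (hG : G.Connected) {a b c d : V}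
    (hab : G.Adj a b) (hac : G.Adj a c) (had : G.Adj a d) (hbc : G.Adj b c) (hbd : G.Adj b d)
    (hcd : G.Adj c d) : Fintype.card V ≤ 4 := by
  refine (card_le_of_closed hG (S := {a, b, c, d}) ?_ (u := a) (by simp)).trans card_le_four
  intro x hx y hxy
  simp only [mem_insert, mem_singleton] at hx ⊢
  rcases hx with rfl | rfl | rfl | rfl
  · have := eq_or_eq_or_eq_of_adj (hd x) hab hac had hbc.ne hbd.ne hcd.ne hxy; tauto
  · have := eq_or_eq_or_eq_of_adj (hd x) hab.symm hbc hbd hac.ne had.ne hcd.ne hxy; tauto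
  · have := eq_or_eq_or_eq_of_adj (hd x) hac.symm hbc.symm hcd hab.ne had.ne hbd.ne hxy; tauto
  · have := eq_or_eq_or_eq_of_adj (hd x) had.symm hbd.symm hcd.symm hab.ne hac.ne hbc.ne hxy
    tauto

theorem isDiamond_of_adj (hd : ∀ v, G.degree v ≤ 3) (hG : G.Connected)
    (hn : 5 ≤ Fintype.card V) {u v w t : V} (huv : G.Adj u v) (huw : G.Adj u w)
    (hvw : G.Adj v w) (hut : G.Adj u t) (hvt : G.Adj v t) (htw : t ≠ w) :
    IsDiamond G w t u v :=
  ⟨huv, huw.symm, hvw.symm, hut.symm, hvt.symm, htw.symm,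
    fun hwt => by have := card_le_four_of_adj hd hG huv huw hut hvw hvt hwt; omega⟩

theorem isLoneTriangleAt_or_isDiamond (hd : ∀ v, G.degree v ≤ 3) (hG : G.Connected)
    (hn : 5 ≤ Fintype.card V) {u v w : V} (huv : G.Adj u v) (huw : G.Adj u w)
    (hvw : G.Adj v w) :
    (IsLoneTriangleAt G u v w ∧ IsLoneTriangleAt G v u w ∧ IsLoneTriangleAt G w u v) ∨
      ∃ p q a b, IsDiamond G p q a b ∧ u ∈ ({p, q, a, b} : Finset V) := by
  by_cases huv' : ∃ t, G.Adj u t ∧ G.Adj v t ∧ t ≠ w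
  · obtain ⟨t, hut, hvt, htw⟩ := huv'
    exact Or.inr ⟨w, t, u, v, isDiamond_of_adj hd hG hn huv huw hvw hut hvt htw, by simp⟩
  by_cases huw' : ∃ t, G.Adj u t ∧ G.Adj w t ∧ t ≠ v
  · obtain ⟨t, hut, hwt, htv⟩ := huw'
    exact Or.inr ⟨v, t, u, w, isDiamond_of_adj hd hG hn huw huv hvw.symm hut hwt htv, by simp⟩
  by_cases hvw' : ∃ t, G.Adj v t ∧ G.Adj w t ∧ t ≠ u
  · obtain ⟨t, hvt, hwt, htu⟩ := hvw'
    exact Or.inr ⟨u, t, v, w,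
      isDiamond_of_adj hd hG hn hvw huv.symm huw.symm hvt hwt htu, by simp⟩
  push Not at huv' huw' hvw'
  exact Or.inl ⟨⟨huv, huw, hvw, huv', huw'⟩,
    ⟨huv.symm, hvw, huw, fun t hvt hut => huv' t hut hvt, hvw'⟩,
    ⟨huw.symm, hvw.symm, huv, fun t hwt hut => huw' t hut hwt, fun t hwt hvt => hvw' t hvt hwt⟩⟩

end Structure

section Blocks
variable {V : Type*} [Fintype V] [DecidableEq V] {G : SimpleGraph V} [DecidableRel G.Adj]

noncomputable def blockWeight (G : SimpleGraph V) [DecidableRel G.Adj] (S : Finset V) : ℝ :=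
  ∑ z ∈ S, (localCC G z + 7 / 12 * #(G.neighborFinset z \ S))

theorem blockWeight_singleton_le {u : V} (hu : G.degree u ≤ 3)
    (h : ∀ v w, G.Adj u v → G.Adj u w → ¬ G.Adj v w) :
    blockWeight G {u} ≤ 7 / 12 * #{u} + 7 / 6 := by
  have hout : (#(G.neighborFinset u \ {u}) : ℝ) ≤ 3 := by
    exact_mod_cast (card_le_card sdiff_subset).trans (G.card_neighborFinset_eq_degree u ▸ hu)
  simp only [blockWeight, sum_singleton, localCC_eq_zero h, card_singleton]
  linarith

theorem blockWeight_triangle_le (hd : ∀ v, G.degree v ≤ 3) (hG : G.Connected)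
    (hn : 4 ≤ Fintype.card V) {u v w : V} (hu : IsLoneTriangleAt G u v w)
    (hv : IsLoneTriangleAt G v u w) (hw : IsLoneTriangleAt G w u v) :
    blockWeight G {u, v, w} ≤ 7 / 12 * #{u, v, w} + 7 / 6 := by
  have huv := hu.adj_left.ne
  have huw := hu.adj_right.ne
  have hvw := hu.adj_base.ne
  have cu := hu.localCC_add_le (hd u) (S := {u, v, w}) (by simp) (by simp)
  have cv := hv.localCC_add_le (hd v) (S := {u, v, w}) (by simp) (by simp)
  have cw := hw.localCC_add_le (hd w) (S := {u, v, w}) (by simp) (by simp)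
  have hopen : ¬ (G.neighborFinset u ⊆ {u, v, w} ∧ G.neighborFinset v ⊆ {u, v, w} ∧
      G.neighborFinset w ⊆ {u, v, w}) := by
    rintro ⟨su, sv, sw⟩
    have := card_le_of_closed hG (S := {u, v, w}) (u := u) (fun x hx y hxy => by
      simp only [mem_insert, mem_singleton] at hx
      rcases hx with rfl | rfl | rfl
      exacts [su ((G.mem_neighborFinset _ _).2 hxy), sv ((G.mem_neighborFinset _ _).2 hxy),
        sw ((G.mem_neighborFinset _ _).2 hxy)]) (by simp)
    have := this.trans card_le_three
    omega
  rw [blockWeight, sum_insert (by simp [huv, huw]), sum_pair hvw,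
    card_insert_of_notMem (by simp [huv, huw]), card_pair hvw]
  push_cast
  rcases cu with ⟨su, cu⟩ | cu <;> rcases cv with ⟨sv, cv⟩ | cv <;>
    rcases cw with ⟨sw, cw⟩ | cw
  · exact absurd ⟨su, sv, sw⟩ hopen
  all_goals linarith

theorem blockWeight_diamond_le (hd : ∀ v, G.degree v ≤ 3) {p q a b : V}
    (h : IsDiamond G p q a b) : blockWeight G {p, q, a, b} ≤ 7 / 12 * #{p, q, a, b} + 7 / 6 := by
  have hpq := h.tips_ne
  have hpa := h.adj_pa.ne
  have hpb := h.adj_pb.ne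
  have hqa := h.adj_qa.ne
  have hqb := h.adj_qb.ne
  have hab := h.adj_centers.ne
  have tip : ∀ {p q}, IsDiamond G p q a b →
      localCC G p + 7 / 12 * #(G.neighborFinset p \ {p, q, a, b}) ≤ 1 := by
    intro p q h
    rcases (h.isLoneTriangleAt_tip (hd a) (hd b)).localCC_add_le (hd p)
      (S := {p, q, a, b}) (by simp) (by simp) with ⟨-, hle⟩ | hle
    exacts [hle, hle.trans (by norm_num)]
  have center : ∀ {a b}, IsDiamond G p q a b →
      localCC G a + 7 / 12 * #(G.neighborFinset a \ {p, q, a, b}) = 2 / 3 := by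
    intro a b h
    rw [h.localCC_center (hd a), sdiff_eq_empty_iff_subset.2 (by
      simp [h.neighborFinset_center (hd a), insert_subset_iff])]
    simp
  have cp := tip h
  have cq := tip h.swap_tips
  rw [insert_comm q p] at cq
  have ca := center h
  have cb := center h.swap_centers
  rw [pair_comm b a] at cb
  rw [blockWeight, sum_insert (by simp [hpq, hpa, hpb]), sum_insert (by simp [hqa, hqb]),
    sum_pair hab, card_insert_of_notMem (by simp [hpq, hpa, hpb]),
    card_insert_of_notMem (by simp [hqa, hqb]), card_pair hab]
  push_cast
  linarith

end Blocks

section Components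
variable {V : Type*} [Fintype V] [DecidableEq V] {G : SimpleGraph V} [DecidableRel G.Adj]

theorem IsLoneTriangleAt.triangleEdgeGraph_reachable_iff (hd : ∀ v, G.degree v ≤ 3) {u v w : V}
    (hu : IsLoneTriangleAt G u v w) (hv : IsLoneTriangleAt G v u w)
    (hw : IsLoneTriangleAt G w u v) (z : V) :
    (triangleEdgeGraph G).Reachable u z ↔ z ∈ ({u, v, w} : Finset V) := by
  refine reachable_iff_mem_of_closed (H := triangleEdgeGraph G) (fun x hx y hxy => ?_) (by simp)
    (fun z hz => ?_) z
  · simp only [mem_insert, mem_singleton] at hx ⊢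
    rcases hx with rfl | rfl | rfl
    · have := hu.eq_or_eq_of_adj (hd x) hxy; tauto
    · have := hv.eq_or_eq_of_adj (hd x) hxy; tauto
    · have := hw.eq_or_eq_of_adj (hd x) hxy; tauto
  · simp only [mem_insert, mem_singleton] at hz
    rcases hz with rfl | rfl | rfl
    · rfl
    · exact SimpleGraph.Adj.reachable ⟨hu.adj_left, w, hu.adj_right, hu.adj_base⟩
    · exact SimpleGraph.Adj.reachable ⟨hu.adj_right, v, hu.adj_left, hu.adj_base.symm⟩

theorem IsDiamond.triangleEdgeGraph_reachable_iff (hd : ∀ v, G.degree v ≤ 3) {p q a b u : V}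
    (h : IsDiamond G p q a b) (hu : u ∈ ({p, q, a, b} : Finset V)) (z : V) :
    (triangleEdgeGraph G).Reachable u z ↔ z ∈ ({p, q, a, b} : Finset V) := by
  set T := triangleEdgeGraph G
  have tip_adj : ∀ {p q}, IsDiamond G p q a b → T.Adj p a :=
    fun h => ⟨h.adj_pa, b, h.adj_pb, h.adj_centers⟩
  have center_adj : ∀ {a b}, IsDiamond G p q a b → ∀ y, G.Adj a y →
      y ∈ ({p, q, a, b} : Finset V) :=
    fun h y hy => by
      have := (G.mem_neighborFinset _ _).2 hy
      rw [h.neighborFinset_center (hd _)] at this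
      simp only [mem_insert, mem_singleton] at this ⊢
      tauto
  have tip_closed : ∀ {p q}, IsDiamond G p q a b → ∀ y, T.Adj p y → y = a ∨ y = b :=
    fun h _ hy => (h.isLoneTriangleAt_tip (hd a) (hd b)).eq_or_eq_of_adj (hd _) hy
  have from_a : ∀ z ∈ ({p, q, a, b} : Finset V), T.Reachable a z := by
    intro z hz
    simp only [mem_insert, mem_singleton] at hz
    rcases hz with rfl | rfl | rfl | rfl
    · exact (tip_adj h).reachable.symm
    · exact (tip_adj h.swap_tips).reachable.symm
    · rfl
    · exact SimpleGraph.Adj.reachable ⟨h.adj_centers, p, h.adj_pa.symm, h.adj_pb.symm⟩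
  refine reachable_iff_mem_of_closed (fun x hx y hxy => ?_) hu
    (fun z hz => (from_a u hu).symm.trans (from_a z hz)) z
  simp only [mem_insert, mem_singleton] at hx
  rcases hx with rfl | rfl | rfl | rfl
  · have := tip_closed h y hxy; simp only [mem_insert, mem_singleton]; tauto
  · have := tip_closed h.swap_tips y hxy; simp only [mem_insert, mem_singleton]; tauto
  · exact center_adj h y hxy.1
  · have := center_adj h.swap_centers y hxy.1
    simp only [mem_insert, mem_singleton] at this ⊢
    tauto

theorem exists_block (hd : ∀ v, G.degree v ≤ 3) (hG : G.Connected) (hn : 5 ≤ Fintype.card V)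
    (u : V) : ∃ S : Finset V, (∀ z, (triangleEdgeGraph G).Reachable u z ↔ z ∈ S) ∧
      blockWeight G S ≤ 7 / 12 * #S + 7 / 6 := by
  by_cases htri : ∃ v w, G.Adj u v ∧ G.Adj u w ∧ G.Adj v w
  · obtain ⟨v, w, huv, huw, hvw⟩ := htri
    rcases isLoneTriangleAt_or_isDiamond hd hG hn huv huw hvw with ⟨hu, hv, hw⟩ |
      ⟨p, q, a, b, h, hmem⟩
    · exact ⟨_, hu.triangleEdgeGraph_reachable_iff hd hv hw,
        blockWeight_triangle_le hd hG (by omega) hu hv hw⟩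
    · exact ⟨_, h.triangleEdgeGraph_reachable_iff hd hmem, blockWeight_diamond_le hd h⟩
  · push Not at htri
    exact ⟨_, triangleEdgeGraph_reachable_iff_of_no_triangle htri,
      blockWeight_singleton_le (hd u) htri⟩

end Components

section Map
variable {V W : Type*} {G : SimpleGraph V}

theorem connected_map_of_surjective (hG : G.Connected) {f : V → W} (hf : Function.Surjective f) :
    (G.map f).Connected := by
  have hreach : ∀ u v, (G.map f).Reachable (f u) (f v) := by
    intro u v
    rw [SimpleGraph.reachable_iff_reflTransGen]
    refine Relation.ReflTransGen.lift' f (fun a b hab => ?_) u v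
      ((G.reachable_iff_reflTransGen u v).1 (hG.preconnected u v))
    by_cases hab' : f a = f b
    · exact (show Relation.ReflTransGen _ (f a) (f b) from hab' ▸ .refl)
    · exact .single (SimpleGraph.map_adj_apply' hab hab')
  have := hG.nonempty.map f
  refine ⟨fun x y => ?_⟩
  obtain ⟨u, rfl⟩ := hf x
  obtain ⟨v, rfl⟩ := hf y
  exact hreach u v

variable [Fintype V] [DecidableEq V] [DecidableRel G.Adj] [Fintype W] [DecidableEq W]

theorem degree_map_le (f : V → W) [DecidableRel (G.map f).Adj] (x : W) :
    (G.map f).degree x ≤ ∑ z with f z = x, #{w ∈ G.neighborFinset z | f w ≠ f z} := by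
  calc (G.map f).degree x
      ≤ #((({z | f z = x} : Finset V).biUnion
          fun z => {w ∈ G.neighborFinset z | f w ≠ f z}).image f) := by
        refine card_le_card fun y hy => ?_
        obtain ⟨hxy, u, v, huv, rfl, rfl⟩ := (G.map f).mem_neighborFinset _ _ |>.1 hy
        exact mem_image.2 ⟨v, mem_biUnion.2 ⟨u, by simp, by simp [huv, Ne.symm hxy]⟩, rfl⟩
    _ ≤ _ := card_image_le.trans card_biUnion_le

theorem two_mul_card_le_sum_card_filter (hG : G.Connected) {f : V → W}
    (hf : Function.Surjective f) :
    2 * Fintype.card W ≤ ∑ z, #{w ∈ G.neighborFinset z | f w ≠ f z} + 2 := by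
  classical
  have hW := (connected_map_of_surjective hG hf).card_vert_le_card_edgeSet_add_one
  rw [Nat.card_eq_fintype_card, Nat.card_eq_fintype_card, ← SimpleGraph.edgeFinset_card] at hW
  have hdeg : 2 * #(G.map f).edgeFinset ≤ ∑ z, #{w ∈ G.neighborFinset z | f w ≠ f z} := by
    rw [← SimpleGraph.sum_degrees_eq_twice_card_edges, ← sum_fiberwise univ f]
    exact sum_le_sum fun x _ => degree_map_le f x
  omega

end Map

section Main
variable {V : Type*} [Fintype V] [DecidableEq V] {G : SimpleGraph V} [DecidableRel G.Adj]

theorem blockWeight_component_le (hd : ∀ v, G.degree v ≤ 3) (hG : G.Connected)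
    (hn : 5 ≤ Fintype.card V) [DecidableEq (triangleEdgeGraph G).ConnectedComponent]
    (x : (triangleEdgeGraph G).ConnectedComponent) :
    blockWeight G {z | (triangleEdgeGraph G).connectedComponentMk z = x} ≤
      7 / 12 * #{z | (triangleEdgeGraph G).connectedComponentMk z = x} + 7 / 6 := by
  induction x using SimpleGraph.ConnectedComponent.ind with | h u => ?_
  obtain ⟨S, hS, hweight⟩ := exists_block hd hG hn u
  have hfiber : ({z | (triangleEdgeGraph G).connectedComponentMk z =
      (triangleEdgeGraph G).connectedComponentMk u} : Finset V) = S := by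
    ext z
    simp [SimpleGraph.reachable_comm, hS]
  rwa [hfiber]

theorem sum_localCC_le (hd : ∀ v, G.degree v ≤ 3) (hG : G.Connected)
    (hn : 5 ≤ Fintype.card V) : ∑ u, localCC G u ≤ 7 / 12 * Fintype.card V + 7 / 6 := by
  classical
  set f := (triangleEdgeGraph G).connectedComponentMk
  set out : V → ℕ := fun z => #{w ∈ G.neighborFinset z | f w ≠ f z}
  have hcross : (2 * Fintype.card (triangleEdgeGraph G).ConnectedComponent : ℝ) ≤
      ∑ z, (out z : ℝ) + 2 := by
    exact_mod_cast two_mul_card_le_sum_card_filter hG (f := f) fun c => c.ind fun v => ⟨v, rfl⟩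
  have hblocks : ∑ z, (localCC G z + 7 / 12 * out z) ≤ 7 / 12 * Fintype.card V +
      7 / 6 * Fintype.card (triangleEdgeGraph G).ConnectedComponent := by
    calc ∑ z, (localCC G z + 7 / 12 * out z)
        = ∑ x, ∑ z with f z = x, (localCC G z + 7 / 12 * out z) := (sum_fiberwise _ _ _).symm
      _ = ∑ x, blockWeight G {z | f z = x} :=
          sum_congr rfl fun x _ => sum_congr rfl fun z hz => by
            obtain rfl := (mem_filter.1 hz).2
            simp [out, sdiff_eq_filter]
      _ ≤ ∑ x, (7 / 12 * (#{z | f z = x} : ℝ) + 7 / 6) :=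
          sum_le_sum fun x _ => blockWeight_component_le hd hG hn x
      _ = _ := by
        have hcard : ∑ x, #{z | f z = x} = Fintype.card V := by
          rw [← card_univ]
          exact (card_eq_sum_card_fiberwise fun _ _ => mem_univ _).symm
        rw [sum_add_distrib, ← mul_sum, sum_const, card_univ, ← Nat.cast_sum, hcard,
          nsmul_eq_mul]
        ring
  rw [sum_add_distrib, ← mul_sum] at hblocks
  linarith

end Main

theorem subcubic_clustering_mod2_general {V : Type*} [Fintype V] (G : SimpleGraph V)
    (hconn : G.Connected) (hdeg : ∀ v, deg G v ≤ 3)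
    (hn : 6 ≤ Fintype.card V) :
    cc G ≤ 7/12 + 14/(12 * (Fintype.card V : ℝ)) := by
  classical
  have hd : ∀ v, G.degree v ≤ 3 := fun v => by rw [← deg_eq_degree]; exact hdeg v
  have hpos : (0 : ℝ) < Fintype.card V := by exact_mod_cast (by omega : 0 < Fintype.card V)
  rw [cc, div_le_iff₀ hpos]
  calc ∑ u, localCC G u ≤ 7 / 12 * Fintype.card V + 7 / 6 := sum_localCC_le hd hconn (by omega)
    _ = (7/12 + 14/(12 * (Fintype.card V : ℝ))) * Fintype.card V := by field_simp; ring

/-- A connected subcubic graph of order `n ≥ 6` with `n ≡ 2 (mod 4)` has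
clustering coefficient at most `7/12 + 14/(12 * (Fintype.card V : ℝ))`. -/
theorem subcubic_clustering_mod2 {V : Type*} [Fintype V] (G : SimpleGraph V)
    (hconn : G.Connected) (hdeg : ∀ v, deg G v ≤ 3)
    (hn : 6 ≤ Fintype.card V) (hmod : Fintype.card V % 4 = 2) :
    cc G ≤ 7/12 + 14/(12 * (Fintype.card V : ℝ)) :=
  subcubic_clustering_mod2_general G hconn hdeg hn

end ClusterCoeff
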